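/- arXiv:2203.07787 — 5 statements merged into one kernel-verified Lean document; each statement's English description precedes it below -/
import Mathlib

section
/- Let χ be a character of K^×. The following are equivalent: (i) χ(s(x)) = χ(x) for all x ∈ K^×; (ii) χ(s(x)·x^{-1}) = 1 for all x ∈ K^×; (iii) χ factors through the norm, i.e. there exists a character θ of F^× such that χ(x) = θ(Nm_{K|F}(x)) for all x ∈ K^×. -/
/-!
Condition (ii) is (i) rewritten. The norm is `s`-invariant because `s² = 1`, which gives
(iii) ⇒ (i). Conversely, an `s`-invariant `χ` kills every `z` with `z · s(z) = 1`: by Hilbert 90,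
applied to the cocycle of `{1, s}` sending `s` to `z`, such a `z` is `s(y)/y`. So `χ` factors
through the norm onto its image in `F^×`, and the induced character extends to all of `F^×`
because `ℂ^×` is divisible, hence injective as an abelian group (Baer's criterion).
-/

noncomputable instance IsAlgClosed.rootableByNatUnits (k : Type*) [Field k] [IsAlgClosed k] :
    RootableBy kˣ ℕ :=
  rootableByOfPowLeftSurj _ _ fun {n} hn x => by
    obtain ⟨z, hz⟩ := IsAlgClosed.exists_pow_nat_eq (x : k) (Nat.pos_of_ne_zero hn)
    have hz0 : z ≠ 0 := by rintro rfl; exact x.ne_zero (by simpa [zero_pow hn] using hz.symm)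
    exact ⟨Units.mk0 z hz0, Units.ext (by simpa using hz)⟩

noncomputable instance IsAlgClosed.rootableByIntUnits (k : Type*) [Field k] [IsAlgClosed k] :
    RootableBy kˣ ℤ :=
  Group.rootableByIntOfRootableByNat _

noncomputable instance Additive.divisibleByInt (A : Type*) [Group A] [RootableBy A ℤ] :
    DivisibleBy (Additive A) ℤ :=
  divisibleByOfSMulRightSurj _ _ fun hn => RootableBy.surjective_pow A ℤ hn

theorem MonoidHom.exists_extend_of_rootableBy {G A : Type*} [CommGroup G] [CommGroup A]
    [RootableBy A ℤ] (H : Subgroup G) (f : H →* A) : ∃ g : G →* A, g.comp H.subtype = f := by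
  obtain ⟨g, hg⟩ := (Module.Baer.of_divisible (Additive A)).extension_property_addMonoidHom
    H.subtype.toAdditive Subtype.val_injective f.toAdditive
  exact ⟨toAdditive.symm g, toAdditive.injective hg⟩

theorem MonoidHom.exists_eq_comp_of_ker_le {G H A : Type*} [Group G] [CommGroup H] [CommGroup A]
    [RootableBy A ℤ] {ν : G →* H} {χ : G →* A} (h : ν.ker ≤ χ.ker) :
    ∃ θ : H →* A, χ = θ.comp ν := by
  obtain ⟨θ, hθ⟩ := exists_extend_of_rootableBy ν.range
    ((QuotientGroup.lift ν.ker χ h).comp (QuotientGroup.quotientKerEquivRange ν).symm.toMonoidHom)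
  refine ⟨θ, ext fun x => ?_⟩
  have := congr($hθ (ν.rangeRestrict x))
  simp only [coe_comp, Function.comp_apply, Subgroup.coe_subtype, coe_rangeRestrict,
    MulEquiv.coe_toMonoidHom] at this
  have hmk : (QuotientGroup.quotientKerEquivRange ν).symm (ν.rangeRestrict x) = (x : G ⧸ ν.ker) :=
    (MulEquiv.symm_apply_eq _).mpr rfl
  rw [comp_apply, this, hmk, QuotientGroup.lift_mk]

theorem mul_self_eq_one_of_card_eq_two {G : Type*} [Group G] (h : Nat.card G = 2) (g : G) :
    g * g = 1 := by
  rw [← sq, ← h, pow_card_eq_one']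

section GaloisGroupOfOrderTwo

variable {F K : Type*} [Field F] [Field K] [Algebra F K]

theorem AlgEquiv.apply_apply_of_card_eq_two (hcard : Nat.card Gal(K/F) = 2) (σ : Gal(K/F))
    (x : K) : σ (σ x) = x :=
  congr($(mul_self_eq_one_of_card_eq_two hcard σ) x)

theorem exists_smul_div_eq_of_mul_smul_eq_one [FiniteDimensional F K]
    (hcard : Nat.card Gal(K/F) = 2) {σ : Gal(K/F)} (hσ : σ ≠ 1) {z : Kˣ} (hz : z * σ • z = 1) :
    ∃ y : Kˣ, σ • y / y = z := by
  classical
  have hcocycle : groupCohomology.IsMulCocycle₁ fun τ : Gal(K/F) => if τ = 1 then 1 else z := by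
    have hσ_unique := (Nat.card_eq_two_iff' (1 : Gal(K/F))).mp hcard
    intro τ ρ
    rcases eq_or_ne τ 1 with rfl | hτ
    · simp
    rcases eq_or_ne ρ 1 with rfl | hρ
    · simp
    rw [hσ_unique.unique hτ hσ, hσ_unique.unique hρ hσ]
    dsimp only
    rw [if_pos (mul_self_eq_one_of_card_eq_two hcard σ), if_neg hσ, mul_comm, hz]
  obtain ⟨y, hy⟩ := groupCohomology.isMulCoboundary₁_of_isMulCocycle₁_of_aut_to_units _ hcocycle
  exact ⟨y, by simpa [hσ] using hy σ⟩

theorem MonoidHom.map_eq_one_of_mul_smul_eq_one {A : Type*} [Group A] [FiniteDimensional F K]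
    (hcard : Nat.card Gal(K/F) = 2) {σ : Gal(K/F)} (hσ : σ ≠ 1) {χ : Kˣ →* A}
    (hχ : ∀ x : Kˣ, χ (σ • x) = χ x) {z : Kˣ} (hz : z * σ • z = 1) : χ z = 1 := by
  obtain ⟨y, rfl⟩ := exists_smul_div_eq_of_mul_smul_eq_one hcard hσ hz
  rw [map_div, hχ, div_self']

end GaloisGroupOfOrderTwo

/-- Let `F ⊆ K` be a Galois extension of fields of degree 2, let `s` be the
nontrivial element of `Gal(K|F)`, and let `ν : Kˣ →* Fˣ` be the norm map (characterized by
`ν x = x · s x`).  For a character `χ : Kˣ →* ℂˣ`, the following are equivalent: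
(i) `χ ∘ s = χ`; (ii) `χ(s(x)·x⁻¹) = 1` for all `x`; (iii) `χ` factors through the norm. -/
theorem stmt_0 {F K : Type*} [Field F] [Field K] [Algebra F K] [IsGalois F K]
    (h2 : Module.finrank F K = 2)
    (s : K ≃ₐ[F] K) (hs : s ≠ AlgEquiv.refl)
    (ν : Kˣ →* Fˣ)
    (hν : ∀ x : Kˣ, (algebraMap F K (ν x) : K) = (x : K) * s (x : K))
    (χ : Kˣ →* ℂˣ) :
    List.TFAE
      [ (∀ x : Kˣ, χ (Units.map (s : K →* K) x) = χ x),
        (∀ x : Kˣ, χ (Units.map (s : K →* K) x * x⁻¹) = 1),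
        (∃ θ : Fˣ →* ℂˣ, ∀ x : Kˣ, χ x = θ (ν x)) ] := by
  have : FiniteDimensional F K := Module.finite_of_finrank_eq_succ h2
  have hcard : Nat.card Gal(K/F) = 2 := (IsGalois.card_aut_eq_finrank F K).trans h2
  have hν_smul (x : Kˣ) : ν (s • x) = ν x := Units.ext <| (algebraMap F K).injective <| by
    rw [hν, hν, AlgEquiv.smul_units_def, Units.coe_map, MonoidHom.coe_coe,
      AlgEquiv.apply_apply_of_card_eq_two hcard, mul_comm]
  have hν_ker {z : Kˣ} (hz : ν z = 1) : z * s • z = 1 := Units.ext <| by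
    rw [Units.val_mul, AlgEquiv.smul_units_def, Units.coe_map, MonoidHom.coe_coe, ← hν, hz,
      Units.val_one, map_one, Units.val_one]
  tfae_have 1 ↔ 2 := forall_congr' fun x => by rw [map_mul, map_inv, mul_inv_eq_one]
  tfae_have 3 → 1 := by
    rintro ⟨θ, hθ⟩ x
    rw [hθ, hθ]
    exact congrArg θ (hν_smul x)
  tfae_have 1 → 3 := fun hχ => by
    obtain ⟨θ, rfl⟩ := MonoidHom.exists_eq_comp_of_ker_le fun z hz =>
      χ.map_eq_one_of_mul_smul_eq_one hcard hs hχ (hν_ker hz)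
    exact ⟨θ, fun x => rfl⟩
  tfae_finish
end

section
/- Suppose χ(x) = 1 for every x ∈ F^× that is a unit of B. Then χ factors through the norm (i.e. there exists a character θ of F^× with χ = θ ∘ Nm_{K|F}) if and only if χ(s(π)·π^{-1}) = 1 and χ(u)² = 1 for every unit u of B. -/
/-!
Both sides are equivalent to the invariance `χ ∘ s = χ`. By Hilbert 90 for the involution `s`,
the kernel of the norm consists of the quotients `w / s w`, so `χ` kills it exactly when `χ` is
`s`-invariant; the induced character of the image of the norm extends to `Fˣ` because `ℂˣ` is
divisible. On the other side, `Kˣ` is generated by `π` and the units of `B`. On `π` invariance says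
`χ (s π / π) = 1`; on a unit `u` the hypothesis gives `χ u * χ (s u) = χ (u * s u) = 1`, so
invariance says `χ u ^ 2 = 1`.
-/

open Module

noncomputable instance IsAlgClosed.rootableByUnits {k : Type*} [Field k] [IsAlgClosed k] :
    RootableBy kˣ ℤ :=
  letI := rootableByOfPowLeftSurj kˣ ℕ fun {n} hn x => by
    obtain ⟨z, hz⟩ := IsAlgClosed.exists_pow_nat_eq (x : k) (Nat.pos_of_ne_zero hn)
    have hz0 : z ≠ 0 := by rintro rfl; exact x.ne_zero (by simp [← hz, hn])
    exact ⟨Units.mk0 z hz0, Units.ext hz⟩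
  Group.rootableByIntOfRootableByNat kˣ

instance Additive.divisibleBy {A : Type*} [CommGroup A] [RootableBy A ℤ] :
    DivisibleBy (Additive A) ℤ where
  div a n := .ofMul (RootableBy.root a.toMul n)
  div_zero a := congrArg Additive.ofMul (RootableBy.root_zero a.toMul)
  div_cancel a hn := congrArg Additive.ofMul (RootableBy.root_cancel a.toMul hn)

theorem MonoidHom.exists_comp_eq_of_injective {G H A : Type*} [CommGroup G] [CommGroup H]
    [CommGroup A] [RootableBy A ℤ] (i : H →* G) (hi : Function.Injective i) (f : H →* A) :
    ∃ g : G →* A, g.comp i = f := by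
  obtain ⟨g, hg⟩ := (Module.Baer.of_divisible (Additive A)).extension_property_addMonoidHom
    i.toAdditive hi f.toAdditive
  exact ⟨MonoidHom.toAdditive.symm g, congrArg MonoidHom.toAdditive.symm hg⟩

theorem MonoidHom.exists_comp_eq_of_ker_le {G H A : Type*} [CommGroup G] [CommGroup H]
    [CommGroup A] [RootableBy A ℤ] (ν : G →* H) (χ : G →* A) (h : ν.ker ≤ χ.ker) :
    ∃ θ : H →* A, θ.comp ν = χ := by
  have hinv := Function.rightInverse_surjInv ν.rangeRestrict_surjective
  have hker : ν.rangeRestrict.ker ≤ χ.ker := by rwa [ν.ker_rangeRestrict]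
  obtain ⟨θ, hθ⟩ := ν.range.subtype.exists_comp_eq_of_injective ν.range.subtype_injective
    (ν.rangeRestrict.liftOfRightInverse _ hinv ⟨χ, hker⟩)
  refine ⟨θ, MonoidHom.ext fun x => ?_⟩
  rw [← ν.rangeRestrict.liftOfRightInverse_comp_apply _ hinv ⟨χ, hker⟩ x, ← hθ]
  rfl

theorem AlgEquiv.involutive_of_finrank_eq_two {F K : Type*} [Field F] [Field K] [Algebra F K]
    (h2 : finrank F K = 2) (s : K ≃ₐ[F] K) : Function.Involutive s := by
  have : FiniteDimensional F K := Module.finite_of_finrank_eq_succ h2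
  have hcard : Fintype.card (K ≃ₐ[F] K) ∣ 2 := by
    have := h2 ▸ AlgEquiv.card_le (F := F) (K := K)
    have := Fintype.card_pos (α := K ≃ₐ[F] K)
    interval_cases Fintype.card (K ≃ₐ[F] K) <;> norm_num
  have hs : s ^ 2 = 1 := orderOf_dvd_iff_pow_eq_one.mp (orderOf_dvd_card.trans hcard)
  exact fun x => by simpa [sq] using congr($hs x)

theorem RingHom.exists_eq_div_apply_of_mul_apply_eq_one {K : Type*} [Field K] (σ : K →+* K)
    (hσ : Function.Involutive σ) (hne : σ ≠ RingHom.id K) {z : K} (hz : z * σ z = 1) :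
    ∃ w ≠ 0, z = w / σ w := by
  -- `w = c + z * σ c` satisfies `z * σ w = w`; it vanishes for every `c` only if `σ = id`.
  obtain ⟨c, hc⟩ : ∃ c, c + z * σ c ≠ 0 := by
    by_contra! h
    have hz1 : z = -1 := by linear_combination h 1 - z * map_one σ
    exact hne (RingHom.ext fun c => by linear_combination (-1 : K) * h c + hz1 * σ c)
  have hσw : σ (c + z * σ c) ≠ 0 := fun h => hc (hσ.injective (by rw [h, map_zero]))
  refine ⟨c + z * σ c, hc, (eq_div_iff hσw).mpr ?_⟩
  rw [map_add, map_mul, hσ c]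
  linear_combination c * hz

theorem exists_comp_norm_iff_comp_unitsMap_eq {F K A : Type*} [Field F] [Field K] [Algebra F K]
    [CommGroup A] [RootableBy A ℤ] (h2 : finrank F K = 2) (s : K ≃ₐ[F] K)
    (hs : s ≠ AlgEquiv.refl) (ν : Kˣ →* Fˣ)
    (hν : ∀ x : Kˣ, (algebraMap F K (ν x) : K) = (x : K) * s (x : K)) (χ : Kˣ →* A) :
    (∃ θ : Fˣ →* A, ∀ x, χ x = θ (ν x)) ↔ χ.comp (Units.map (s : K →* K)) = χ := by
  have hinv := AlgEquiv.involutive_of_finrank_eq_two h2 s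
  have hνs : ∀ x, ν (Units.map (s : K →* K) x) = ν x := fun x =>
    Units.ext <| (algebraMap F K).injective <| by
      rw [hν, hν, Units.coe_map, MonoidHom.coe_coe, hinv, mul_comm]
  constructor
  · rintro ⟨θ, hθ⟩
    ext x
    simp only [MonoidHom.comp_apply, hθ, hνs]
  · intro hχ
    have hne : (s : K →+* K) ≠ RingHom.id K := fun h => hs (AlgEquiv.ext fun x => congr($h x))
    obtain ⟨θ, hθ⟩ := ν.exists_comp_eq_of_ker_le χ fun z hz => by
      have hz' : (z : K) * s z = 1 := by rw [← hν, ν.mem_ker.mp hz]; simp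
      obtain ⟨w, hw0, hzw⟩ := (s : K →+* K).exists_eq_div_apply_of_mul_apply_eq_one hinv hne hz'
      have hzw' : z = Units.mk0 w hw0 / Units.map (s : K →* K) (Units.mk0 w hw0) :=
        Units.ext (by simpa using hzw)
      rw [MonoidHom.mem_ker, hzw', map_div, ← MonoidHom.comp_apply, hχ, div_self']
    exact ⟨θ, fun x => congr($hθ x).symm⟩

namespace IsDiscreteValuationRing

variable {R K : Type*} [CommRing R] [IsDomain R] [IsDiscreteValuationRing R] [Field K]
  [Algebra R K] [IsFractionRing R K]

theorem units_monoidHom_ext {G : Type*} [Group G] {ϖ : R} (hϖ : Irreducible ϖ)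
    {f g : Kˣ →* G}
    (hunit : ∀ u : Rˣ, f (Units.map (algebraMap R K : R →* K) u) =
      g (Units.map (algebraMap R K : R →* K) u))
    (hϖfg : ∀ x : Kˣ, (x : K) = algebraMap R K ϖ → f x = g x) : f = g := by
  ext x
  obtain ⟨n, u, hx⟩ := exists_units_eq_smul_zpow_of_irreducible hϖ x.ne_zero
  have hϖ0 : algebraMap R K ϖ ≠ 0 := by simpa using hϖ.ne_zero
  have hx' : x = Units.map (algebraMap R K : R →* K) u * Units.mk0 _ hϖ0 ^ n :=
    Units.ext (by simp [hx, Units.smul_def, Algebra.smul_def])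
  rw [hx', map_mul, map_mul, map_zpow, map_zpow, hunit, hϖfg _ rfl]

theorem comp_unitsMap_eq_iff {A : Type*} [CommGroup A] {ϖ : R} (hϖ : Irreducible ϖ)
    (σ : K →* K) (χ : Kˣ →* A)
    (hnorm : ∀ u : Rˣ, χ (Units.map (algebraMap R K : R →* K) u) *
      χ (Units.map σ (Units.map (algebraMap R K : R →* K) u)) = 1) :
    χ.comp (Units.map σ) = χ ↔
      (∀ y : Kˣ, (y : K) * algebraMap R K ϖ = σ (algebraMap R K ϖ) → χ y = 1) ∧
      (∀ u : Rˣ, ∀ y : Kˣ, (y : K) = algebraMap R K u → χ y ^ 2 = 1) := by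
  constructor
  · intro hχ
    refine ⟨fun y hy => ?_, fun u y hy => ?_⟩
    · have hϖ0 : algebraMap R K ϖ ≠ 0 := by simpa using hϖ.ne_zero
      have hy' : y = Units.map σ (Units.mk0 _ hϖ0) / Units.mk0 _ hϖ0 :=
        Units.ext (by simpa [eq_div_iff hϖ0] using hy)
      rw [hy', map_div, ← MonoidHom.comp_apply, hχ, div_self']
    · rw [show y = Units.map (algebraMap R K : R →* K) u from Units.ext hy, sq]
      nth_rewrite 2 [← hχ]
      exact hnorm u
  · rintro ⟨hϖχ, hsq⟩
    refine units_monoidHom_ext hϖ (fun u => ?_) (fun x hx => ?_)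
    · rw [MonoidHom.comp_apply, eq_inv_of_mul_eq_one_right (hnorm u)]
      exact inv_eq_of_mul_eq_one_right (by rw [← sq]; exact hsq u _ rfl)
    · have hx0 : (x : K) ≠ 0 := x.ne_zero
      have := hϖχ (Units.map σ x / x) (by simp [← hx, hx0])
      rwa [map_div, div_eq_one] at this

end IsDiscreteValuationRing

theorem exists_units_apply_algebraMap_eq {R K : Type*} [CommRing R] [Semiring K] [Algebra R K]
    (hinj : Function.Injective (algebraMap R K)) (σ : K →* K)
    (hσ : ∀ b : R, ∃ b' : R, σ (algebraMap R K b) = algebraMap R K b') (u : Rˣ) :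
    ∃ u' : Rˣ, σ (algebraMap R K u) = algebraMap R K u' := by
  obtain ⟨b, hb⟩ := hσ u
  obtain ⟨c, hc⟩ := hσ ↑u⁻¹
  have hbc : b * c = 1 := hinj <| by
    rw [map_mul, map_one, ← hb, ← hc, ← map_mul, ← map_mul, Units.mul_inv, map_one, map_one]
  exact ⟨⟨b, c, hbc, mul_comm c b ▸ hbc⟩, hb⟩

theorem stmt_2_general {F K B : Type*} [Field F] [Field K] [Algebra F K]
    (h2 : Module.finrank F K = 2)
    (s : K ≃ₐ[F] K) (hs : s ≠ AlgEquiv.refl)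
    (ν : Kˣ →* Fˣ)
    (hν : ∀ x : Kˣ, (algebraMap F K (ν x) : K) = (x : K) * s (x : K))
    [CommRing B] [IsDomain B] [IsDiscreteValuationRing B]
    [Algebra B K] [IsFractionRing B K]
    (hsB : ∀ b : B, ∃ b' : B, s (algebraMap B K b) = algebraMap B K b')
    (π : B) (hπ : Ideal.span {π} = IsLocalRing.maximalIdeal B)
    (χ : Kˣ →* ℂˣ)
    (hχF : ∀ (x : Fˣ) (b : Bˣ), algebraMap B K (b : B) = algebraMap F K (x : F) →
      ∀ y : Kˣ, (y : K) = algebraMap F K (x : F) → χ y = 1) :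
    (∃ θ : Fˣ →* ℂˣ, ∀ x : Kˣ, χ x = θ (ν x)) ↔
      ((∀ y : Kˣ, (y : K) * algebraMap B K π = s (algebraMap B K π) → χ y = 1) ∧
        (∀ u : Bˣ, ∀ y : Kˣ, (y : K) = algebraMap B K (u : B) → (χ y) ^ 2 = 1)) := by
  have hirr : Irreducible π := (IsDiscreteValuationRing.irreducible_iff_uniformizer π).mpr hπ.symm
  have hnorm : ∀ u : Bˣ, χ (Units.map (algebraMap B K : B →* K) u) *
      χ (Units.map (s : K →* K) (Units.map (algebraMap B K : B →* K) u)) = 1 := by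
    intro u
    obtain ⟨u', hu'⟩ :=
      exists_units_apply_algebraMap_eq (IsFractionRing.injective B K) (s : K →* K) hsB u
    have hsu : s (algebraMap B K u) = algebraMap B K u' := hu'
    rw [← map_mul]
    exact hχF (ν (Units.map (algebraMap B K : B →* K) u)) (u * u') (by simp [hν, hsu])
      _ (by simp [hν])
  exact (exists_comp_norm_iff_comp_unitsMap_eq h2 s hs ν hν χ).trans
    (IsDiscreteValuationRing.comp_unitsMap_eq_iff hirr _ χ hnorm)

/-- `F ⊆ K` Galois of degree 2 with nontrivial automorphism `s`,
`ν : Kˣ →* Fˣ` the norm map (`ν x = x · s x`), `B` a discrete valuation ring with fraction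
field `K` stable under `s`, and `π` a uniformizer of `B` (generator of the maximal ideal).
If the character `χ : Kˣ →* ℂˣ` is trivial on every element of `F^×` that is a unit of `B`,
then `χ` factors through the norm iff `χ(s(π)·π⁻¹) = 1` and `χ(u)² = 1` for every unit
`u` of `B`. -/
theorem stmt_2 {F K B : Type*} [Field F] [Field K] [Algebra F K] [IsGalois F K]
    (h2 : Module.finrank F K = 2)
    (s : K ≃ₐ[F] K) (hs : s ≠ AlgEquiv.refl)
    (ν : Kˣ →* Fˣ)
    (hν : ∀ x : Kˣ, (algebraMap F K (ν x) : K) = (x : K) * s (x : K))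
    [CommRing B] [IsDomain B] [IsDiscreteValuationRing B]
    [Algebra B K] [IsFractionRing B K]
    (hsB : ∀ b : B, ∃ b' : B, s (algebraMap B K b) = algebraMap B K b')
    (π : B) (hπ : Ideal.span {π} = IsLocalRing.maximalIdeal B)
    (χ : Kˣ →* ℂˣ)
    (hχF : ∀ (x : Fˣ) (b : Bˣ), algebraMap B K (b : B) = algebraMap F K (x : F) →
      ∀ y : Kˣ, (y : K) = algebraMap F K (x : F) → χ y = 1) :
    (∃ θ : Fˣ →* ℂˣ, ∀ x : Kˣ, χ x = θ (ν x)) ↔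
      ((∀ y : Kˣ, (y : K) * algebraMap B K π = s (algebraMap B K π) → χ y = 1) ∧
        (∀ u : Bˣ, ∀ y : Kˣ, (y : K) = algebraMap B K (u : B) → (χ y) ^ 2 = 1)) :=
  stmt_2_general h2 s hs ν hν hsB π hπ χ hχF
end

section
/- For every integer k ≥ 1, the set U_k := { N(x) mod 3^{⌈k/2⌉} : x ∈ ℤ[√3] whose class modulo (√3)^k is a unit } is a subgroup of (ℤ/3^{⌈k/2⌉}ℤ)^×; it is cyclic of order 3^{⌊(k−1)/2⌋}, generated by the class of 4. -/
/-!
Since `√3² = 3`, reduction modulo `√3` sends `a + b√3` to `a mod 3` and `N(a + b√3) ≡ a² mod 3`.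
So the norm of a unit modulo `(√3)^k` is `≡ 1 mod 3`, i.e. it lies in the kernel of the reduction
`(ℤ/3^m)ˣ → (ℤ/3)ˣ`, with `m = ⌈k/2⌉`. This kernel has order `3^(m-1)` and contains `4 = 1 + 3`,
whose order is also `3^(m-1)`; hence it is generated by `4`, and every power `4^j = N(2^j)`
is attained, `2` being a unit modulo `(√3)^k` because `2² = 1 + 3` with `3` nilpotent.
-/

namespace ZMod

theorem card_ker_unitsMap_prime_pow (p : ℕ) [Fact p.Prime] (n : ℕ) :
    Nat.card (unitsMap (dvd_pow_self p n.succ_ne_zero)).ker = p ^ n := by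
  have hsurj := unitsMap_surjective (m := p ^ (n + 1)) (dvd_pow_self p n.succ_ne_zero)
  have hcard := Subgroup.card_eq_card_quotient_mul_card_subgroup
    (unitsMap (dvd_pow_self p n.succ_ne_zero)).ker
  rw [Nat.card_congr (QuotientGroup.quotientKerEquivOfSurjective _ hsurj).toEquiv,
    Nat.card_eq_fintype_card, Nat.card_eq_fintype_card, card_units_eq_totient, card_units,
    Nat.totient_prime_pow_succ Fact.out, mul_comm] at hcard
  exact (Nat.eq_of_mul_eq_mul_left (Nat.sub_pos_of_lt (Fact.out : p.Prime).one_lt) hcard).symm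

theorem zpowers_eq_ker_unitsMap_of_val_eq_one_add {p : ℕ} [Fact p.Prime] (hp2 : p ≠ 2) (n : ℕ)
    {g : (ZMod (p ^ (n + 1)))ˣ} (hg : (g : ZMod (p ^ (n + 1))) = 1 + p) :
    Subgroup.zpowers g = (unitsMap (dvd_pow_self p n.succ_ne_zero)).ker := by
  refine Subgroup.eq_of_le_of_card_ge ?_ ?_
  · rw [Subgroup.zpowers_le, MonoidHom.mem_ker, Units.ext_iff, unitsMap_val, hg]
    simp
  · rw [card_ker_unitsMap_prime_pow, Nat.card_zpowers, ← orderOf_units, hg,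
      orderOf_one_add_prime Fact.out hp2]

end ZMod

namespace Zsqrtd

theorem intCast_norm_eq_re_sq (p : ℕ) (x : ℤ√p) : ((x.norm : ℤ) : ZMod p) = x.re ^ 2 := by
  simp [norm_def, sq]

theorem isUnit_re_of_isUnit_mk_sqrtd_pow {p k : ℕ} (hk : k ≠ 0) {x : ℤ√p}
    (hx : IsUnit (Ideal.Quotient.mk (Ideal.span {(sqrtd : ℤ√p) ^ k}) x)) :
    IsUnit (x.re : ZMod p) := by
  let φ : ℤ√p →+* ZMod p := lift ⟨0, by simp⟩
  have hφ : ∀ a ∈ Ideal.span {(sqrtd : ℤ√p) ^ k}, φ a = 0 := by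
    intro a ha
    obtain ⟨b, rfl⟩ := Ideal.mem_span_singleton'.mp ha
    have hsqrtd : φ sqrtd = 0 := by simp [φ]
    rw [map_mul, map_pow, hsqrtd, zero_pow hk, mul_zero]
  simpa [φ] using hx.map (Ideal.Quotient.lift _ φ hφ)

theorem intCast_norm_eq_one_of_isUnit_mk_sqrtd_pow {k : ℕ} (hk : k ≠ 0) {x : ℤ√3}
    (hx : IsUnit (Ideal.Quotient.mk (Ideal.span {(sqrtd : ℤ√3) ^ k}) x)) :
    ((x.norm : ℤ) : ZMod 3) = 1 := by
  have hre : IsUnit (x.re : ZMod 3) := isUnit_re_of_isUnit_mk_sqrtd_pow (p := 3) hk hx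
  rw [intCast_norm_eq_re_sq 3 x]
  exact ZMod.pow_card_sub_one_eq_one (p := 3) hre.ne_zero

theorem isUnit_mk_two (k : ℕ) :
    IsUnit (Ideal.Quotient.mk (Ideal.span {(sqrtd : ℤ√3) ^ k}) 2) := by
  have hnil : IsNilpotent (Ideal.Quotient.mk (Ideal.span {(sqrtd : ℤ√3) ^ k}) 3) := by
    refine ⟨k, ?_⟩
    rw [← map_pow, Ideal.Quotient.eq_zero_iff_mem, Ideal.mem_span_singleton,
      show (3 : ℤ√3) = sqrtd ^ 2 by rw [sq, dmuld]; rfl, ← pow_mul]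
    exact pow_dvd_pow _ (by omega)
  refine isUnit_of_mul_isUnit_left (y := Ideal.Quotient.mk _ 2) ?_
  rw [← map_mul, show (2 * 2 : ℤ√3) = 1 + 3 by norm_num, map_add, map_one]
  exact hnil.isUnit_one_add

theorem norm_two_pow (j : ℕ) : ((2 : ℤ√3) ^ j).norm = 4 ^ j := by
  induction j with
  | zero => simp
  | succ j ih => rw [pow_succ, norm_mul, ih, pow_succ]; norm_num [norm_def]

end Zsqrtd

/-- For every `k ≥ 1`, the set
`U_k = { N(x) mod 3^⌈k/2⌉ : x ∈ ℤ[√3], x a unit mod (√3)^k }` is a subgroup of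
`(ℤ/3^⌈k/2⌉ℤ)ˣ`, cyclic of order `3^⌊(k-1)/2⌋` and generated by the class of `4`.
(Here `⌈k/2⌉ = (k+1)/2` and `⌊(k-1)/2⌋ = (k-1)/2` in natural-number division.) -/
theorem stmt_6 (k : ℕ) (hk : 1 ≤ k) :
    ∃ U : Subgroup (ZMod (3 ^ ((k + 1) / 2)))ˣ,
      (∀ v : (ZMod (3 ^ ((k + 1) / 2)))ˣ,
        v ∈ U ↔ ∃ x : Zsqrtd 3,
          IsUnit (Ideal.Quotient.mk (Ideal.span {(Zsqrtd.sqrtd : Zsqrtd 3) ^ k}) x) ∧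
          (Zsqrtd.norm x : ZMod (3 ^ ((k + 1) / 2))) = (v : ZMod (3 ^ ((k + 1) / 2)))) ∧
      Nat.card U = 3 ^ ((k - 1) / 2) ∧
      (∃ g : (ZMod (3 ^ ((k + 1) / 2)))ˣ, (g : ZMod (3 ^ ((k + 1) / 2))) = 4 ∧
        Subgroup.zpowers g = U) := by
  obtain ⟨n, hn, hn'⟩ : ∃ n, (k + 1) / 2 = n + 1 ∧ (k - 1) / 2 = n := ⟨(k - 1) / 2, by omega, rfl⟩
  rw [hn, hn']
  have : Fact (Nat.Prime 3) := ⟨Nat.prime_three⟩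
  let g : (ZMod (3 ^ (n + 1)))ˣ := ZMod.unitOfCoprime 4 (Nat.Coprime.pow_right _ (by norm_num))
  have hg : (g : ZMod (3 ^ (n + 1))) = 4 := by simp [g]
  have hU := ZMod.zpowers_eq_ker_unitsMap_of_val_eq_one_add (by norm_num) n
    (hg.trans (by norm_num : (4 : ZMod (3 ^ (n + 1))) = 1 + (3 : ℕ)))
  refine ⟨_, fun v => ⟨fun hv => ?_, fun ⟨x, hx, hxv⟩ => ?_⟩,
    ZMod.card_ker_unitsMap_prime_pow 3 n, g, hg, hU⟩
  · obtain ⟨j, rfl⟩ :=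
      (Submonoid.mem_powers_iff _ _).mp (mem_powers_iff_mem_zpowers.mpr (hU ▸ hv))
    refine ⟨2 ^ j, ?_, ?_⟩
    · rw [map_pow]
      exact (Zsqrtd.isUnit_mk_two k).pow j
    · rw [Zsqrtd.norm_two_pow, Units.val_pow_eq_pow_val, hg]
      simp
  · rw [MonoidHom.mem_ker, Units.ext_iff, ZMod.unitsMap_val, ← hxv,
      ZMod.cast_intCast (dvd_pow_self 3 n.succ_ne_zero), Units.val_one]
    exact Zsqrtd.intCast_norm_eq_one_of_isUnit_mk_sqrtd_pow (by omega) hx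
end

section
/- Let k ≥ 3 be an integer and let U_k ≤ (ℤ/2^{⌈k/2⌉}ℤ)^× be the subgroup { N(x) mod 2^{⌈k/2⌉} : x ∈ ℤ[i] whose class modulo (1+i)^k is a unit }. Then the quotient group (ℤ/2^{⌈k/2⌉}ℤ)^× / U_k has order 2 and is generated by the class of −1; in particular, −1 mod 2^{⌈k/2⌉} does not lie in U_k. -/
/-! Reduction modulo 4 identifies the group of unit norms with the kernel of
`(ℤ/2^m)ˣ → (ℤ/4)ˣ`, which has index 2 and does not contain `-1`. A sum of two squares that is
odd is `1 mod 4`. Conversely, every `n ≡ 1 mod 4` is congruent mod `2^m` to `a² + b²` with `a`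
odd and `b` even: lift one power of 2 at a time, replacing `a` by `a + 2^(m-1)`, which changes
`a²` by `2^m` modulo `2^(m+1)` once `m ≥ 3`. Such an `a + bi` is a unit modulo `(1+i)^k`,
because its norm `(a + bi)(a - bi)` is odd, and `(1+i)^k` divides `2^k`. -/

open Zsqrtd

lemma Ideal.Quotient.isUnit_mk_span_singleton_of_isCoprime {R : Type*} [CommRing R] {x a : R}
    (h : IsCoprime x a) : IsUnit (Ideal.Quotient.mk (Ideal.span {a}) x) := by
  obtain ⟨u, v, huv⟩ := h
  refine .of_mul_eq_one (Ideal.Quotient.mk _ u) ?_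
  rw [← map_mul, ← map_one (Ideal.Quotient.mk _), Ideal.Quotient.eq, Ideal.mem_span_singleton]
  exact ⟨-v, by linear_combination huv⟩

lemma Int.exists_odd_even_sq_add_sq_modEq {n : ℤ} (hn : n ≡ 1 [ZMOD 4]) (m : ℕ) :
    ∃ a b : ℤ, Odd a ∧ Even b ∧ a ^ 2 + b ^ 2 ≡ n [ZMOD 2 ^ m] := by
  suffices h : ∀ m, 3 ≤ m → ∃ a b : ℤ, Odd a ∧ Even b ∧ (2 ^ m : ℤ) ∣ n - (a ^ 2 + b ^ 2) by
    obtain ⟨a, b, ha, hb, hdvd⟩ := h (max m 3) (le_max_right _ _)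
    exact ⟨a, b, ha, hb, Int.modEq_iff_dvd.mpr ((pow_dvd_pow 2 (le_max_left m 3)).trans hdvd)⟩
  intro m hm
  induction m, hm using Nat.le_induction with
  | base =>
    have hn8 : n % 8 = 1 ∨ n % 8 = 5 := by rw [Int.ModEq] at hn; omega
    rcases hn8 with h | h
    · exact ⟨1, 0, odd_one, .zero, by omega⟩
    · exact ⟨1, 2, odd_one, even_two, by omega⟩
  | succ m hm ih =>
    obtain ⟨a, b, ha, hb, t, ht⟩ := ih
    rcases Int.even_or_odd t with ⟨s, hs⟩ | ⟨s, hs⟩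
    · exact ⟨a, b, ha, hb, s, by rw [ht, hs]; ring⟩
    · obtain ⟨e, rfl⟩ : ∃ e, m = e + 3 := ⟨m - 3, by omega⟩
      obtain ⟨a', rfl⟩ := ha
      refine ⟨2 * a' + 1 + 2 ^ (e + 2), b, ?_, hb, s - a' - 2 ^ e, ?_⟩
      · exact (odd_two_mul_add_one a').add_even (even_two.pow_of_ne_zero (by omega))
      · linear_combination ht + 2 ^ (e + 3) * hs

lemma ZMod.sq_add_sq_eq_one_of_isUnit {a b : ZMod 4} (h : IsUnit (a ^ 2 + b ^ 2)) :
    a ^ 2 + b ^ 2 = 1 := by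
  obtain ⟨c, hc⟩ := h.exists_right_inv
  revert a b c
  decide

lemma ZMod.unitsMap_four_neg_one_ne_one {n : ℕ} (h : 4 ∣ n) : ZMod.unitsMap h (-1) ≠ 1 := by
  rw [Ne, Units.ext_iff, ZMod.unitsMap_val, Units.val_neg, Units.val_one,
    ← ZMod.castHom_apply (h := h), map_neg, map_one]
  decide

lemma ZMod.card_units_four : Nat.card (ZMod 4)ˣ = 2 := by
  rw [Nat.card_eq_fintype_card, ZMod.card_units_eq_totient]
  decide

lemma four_dvd_two_pow {m : ℕ} (hm : 2 ≤ m) : 4 ∣ 2 ^ m :=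
  pow_dvd_pow 2 hm

namespace GaussianInt

lemma norm_eq_re_sq_add_im_sq (x : GaussianInt) : x.norm = x.re ^ 2 + x.im ^ 2 := by
  rw [Zsqrtd.norm_def]; ring

lemma one_add_sqrtd_dvd_two : (1 + sqrtd : GaussianInt) ∣ 2 :=
  ⟨1 - sqrtd, by ext <;> simp⟩

lemma isUnit_mk_span_pow_of_odd_norm (k : ℕ) {x : GaussianInt} (hx : Odd x.norm) :
    IsUnit (Ideal.Quotient.mk (Ideal.span {(1 + sqrtd : GaussianInt) ^ k}) x) := by
  have hnorm : IsCoprime x.norm (2 ^ k) := (Int.isCoprime_two_right.mpr hx).pow_right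
  have hconj : IsCoprime (x * star x) (2 ^ k) := by
    rw [← norm_eq_mul_conj]; exact_mod_cast hnorm.map (Int.castRingHom GaussianInt)
  exact Ideal.Quotient.isUnit_mk_span_singleton_of_isCoprime
    (hconj.of_mul_left_left.of_isCoprime_of_dvd_right (pow_dvd_pow_of_dvd one_add_sqrtd_dvd_two k))

theorem exists_isUnit_mk_norm_eq_iff {m : ℕ} (hm : 2 ≤ m) (k : ℕ) (v : (ZMod (2 ^ m))ˣ) :
    (∃ x : GaussianInt, IsUnit (Ideal.Quotient.mk (Ideal.span {(1 + sqrtd : GaussianInt) ^ k}) x) ∧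
      (x.norm : ZMod (2 ^ m)) = v) ↔ ZMod.unitsMap (four_dvd_two_pow hm) v = 1 := by
  constructor
  · rintro ⟨x, -, hx⟩
    have hv : (ZMod.unitsMap (four_dvd_two_pow hm) v : ZMod 4) =
        (x.re : ZMod 4) ^ 2 + (x.im : ZMod 4) ^ 2 := by
      rw [ZMod.unitsMap_val, ← hx, ZMod.cast_intCast (four_dvd_two_pow hm),
        norm_eq_re_sq_add_im_sq]
      push_cast; rfl
    exact Units.ext (hv ▸ ZMod.sq_add_sq_eq_one_of_isUnit (hv ▸ Units.isUnit _))
  · intro hv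
    set n : ℤ := (v : ZMod (2 ^ m)).cast
    have hn : n ≡ 1 [ZMOD 4] := by
      have h4 : ((n : ℤ) : ZMod 4) = ((1 : ℤ) : ZMod 4) := by
        rw [← ZMod.cast_intCast (four_dvd_two_pow hm), ZMod.intCast_zmod_cast,
          ← ZMod.unitsMap_val (four_dvd_two_pow hm), hv, Int.cast_one, Units.val_one]
      exact_mod_cast (ZMod.intCast_eq_intCast_iff _ _ 4).mp h4
    obtain ⟨a, b, ha, hb, hab⟩ := Int.exists_odd_even_sq_add_sq_modEq hn m
    have hnorm : (⟨a, b⟩ : GaussianInt).norm = a ^ 2 + b ^ 2 := norm_eq_re_sq_add_im_sq _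
    refine ⟨⟨a, b⟩, isUnit_mk_span_pow_of_odd_norm k ?_, ?_⟩
    · rw [hnorm]; exact ha.pow.add_even (hb.pow_of_ne_zero two_ne_zero)
    · rw [hnorm, (ZMod.intCast_eq_intCast_iff _ _ _).mpr (by exact_mod_cast hab),
        ZMod.intCast_zmod_cast]

end GaussianInt

/-- For `k ≥ 3`, let `U_k ≤ (ℤ/2^⌈k/2⌉ℤ)ˣ` be the subgroup of norms
`N(x) mod 2^⌈k/2⌉` of elements `x ∈ ℤ[i]` that are units modulo `(1+i)^k`.  Then the
quotient `(ℤ/2^⌈k/2⌉ℤ)ˣ / U_k` has order 2 and is generated by the class of `-1`;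
in particular `-1 ∉ U_k`. -/
theorem stmt_14 (k : ℕ) (hk : 3 ≤ k)
    (U : Subgroup (ZMod (2 ^ ((k + 1) / 2)))ˣ)
    (hU : ∀ v : (ZMod (2 ^ ((k + 1) / 2)))ˣ,
      v ∈ U ↔ ∃ x : GaussianInt,
        IsUnit (Ideal.Quotient.mk (Ideal.span {(1 + Zsqrtd.sqrtd : GaussianInt) ^ k}) x) ∧
        (Zsqrtd.norm x : ZMod (2 ^ ((k + 1) / 2))) = (v : ZMod (2 ^ ((k + 1) / 2)))) :
    Nat.card ((ZMod (2 ^ ((k + 1) / 2)))ˣ ⧸ U) = 2 ∧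
    Subgroup.zpowers
      (QuotientGroup.mk (-1 : (ZMod (2 ^ ((k + 1) / 2)))ˣ) :
        (ZMod (2 ^ ((k + 1) / 2)))ˣ ⧸ U) = ⊤ ∧
    (-1 : (ZMod (2 ^ ((k + 1) / 2)))ˣ) ∉ U := by
  have hm : 2 ≤ (k + 1) / 2 := by omega
  have hU_ker : U = (ZMod.unitsMap (four_dvd_two_pow hm)).ker := by
    ext v
    rw [hU, MonoidHom.mem_ker, GaussianInt.exists_isUnit_mk_norm_eq_iff hm]
  have hcard : Nat.card ((ZMod (2 ^ ((k + 1) / 2)))ˣ ⧸ U) = 2 := by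
    rw [← Subgroup.index_eq_card, hU_ker, Subgroup.index_ker,
      MonoidHom.range_eq_top.mpr (ZMod.unitsMap_surjective _), Subgroup.card_top,
      ZMod.card_units_four]
  have hneg : (-1 : (ZMod (2 ^ ((k + 1) / 2)))ˣ) ∉ U := by
    rw [hU_ker, MonoidHom.mem_ker]
    exact ZMod.unitsMap_four_neg_one_ne_one _
  refine ⟨hcard, zpowers_eq_top_of_prime_card hcard ?_, hneg⟩
  rwa [Ne, QuotientGroup.eq_one_iff]
end

section
/- Let k ≥ 7 be an integer. The set U_k := { N(x) mod 2^{⌈k/2⌉} : x ∈ ℤ[√2] whose class modulo (√2)^k is a unit } is a subgroup of (ℤ/2^{⌈k/2⌉}ℤ)^×; it is the internal direct product of the cyclic subgroup generated by the class of −1, which has order 2, and the cyclic subgroup generated by the class of −9, which has order 2^{⌊(k−5)/2⌋}; in particular U_k is isomorphic to ℤ/2ℤ × ℤ/2^{⌊(k−5)/2⌋}ℤ. -/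
/-!
Write `m = ⌈k/2⌉ ≥ 4`. A unit `a + b√2` modulo `(√2)^k` has `a` odd, so its norm `a² - 2b²` is
`±1` mod 8. Conversely `1 + √2` and `3 + 3√2` have norms `-1` and `-9`, and every element of odd
norm is a unit modulo `(√2)^k`. So `U_k` lies between `⟨-1⟩ ⊔ ⟨-9⟩` and the subgroup of units
that are `±1` mod 8, which has index 2 in `(ℤ/2^m)ˣ`, i.e. order `2^(m-2)`.
Since `81 = 1 + 2⁴·5`, the order of `-9` is `2^(m-3)`, and `-1 ∉ ⟨-9⟩`, so
`⟨-1⟩ ⊔ ⟨-9⟩ ≅ ⟨-1⟩ × ⟨-9⟩` already has order `2^(m-2)`, and the two bounds agree.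
-/

open Subgroup

namespace Subgroup

section CommGroup

variable {G : Type*} [CommGroup G] {H K : Subgroup G}

noncomputable def prodMulEquivSupOfDisjoint (hHK : Disjoint H K) : H × K ≃* ↥(H ⊔ K) :=
  let f := H.subtype.noncommCoprod K.subtype fun _ _ ↦ Commute.all _ _
  have hf : Function.Injective f := (MonoidHom.noncommCoprod_injective _ _ _).2
    ⟨H.subtype_injective, K.subtype_injective, by simpa only [range_subtype] using hHK⟩
  (MonoidHom.ofInjective hf).trans <| MulEquiv.subgroupCongr <| by
    simp only [f, MonoidHom.noncommCoprod_range, range_subtype]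

theorem card_sup_of_disjoint (hHK : Disjoint H K) :
    Nat.card ↥(H ⊔ K) = Nat.card H * Nat.card K := by
  rw [← Nat.card_prod, Nat.card_congr (prodMulEquivSupOfDisjoint hHK).toEquiv]

end CommGroup

theorem disjoint_zpowers_neg_one {G : Type*} [Group G] [HasDistribNeg G] {H : Subgroup G}
    (h : (-1 : G) ∉ H) : Disjoint (zpowers (-1 : G)) H := by
  have hfin : IsOfFinOrder (-1 : G) := isOfFinOrder_iff_pow_eq_one.2 ⟨2, two_pos, by simp⟩
  rw [disjoint_def]
  intro x hx hxH
  obtain ⟨j, rfl⟩ := hfin.mem_powers_iff_mem_zpowers.2 hx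
  exact (neg_one_pow_eq_or G j).resolve_right fun h1 ↦ h (h1 ▸ hxH)

end Subgroup

namespace ZMod

theorem orderOf_neg_one_units {N : ℕ} (hN : 2 < N) : orderOf (-1 : (ZMod N)ˣ) = 2 := by
  have : Nontrivial (ZMod N) := ZMod.nontrivial_iff.2 (by omega)
  rw [← orderOf_units, Units.val_neg, Units.val_one, orderOf_neg_one, ZMod.ringChar_zmod_n,
    if_neg hN.ne']

theorem card_zpowers_neg_one_units_two_pow (n : ℕ) :
    Nat.card (zpowers (-1 : (ZMod (2 ^ (n + 4)))ˣ)) = 2 := by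
  rw [Nat.card_zpowers, orderOf_neg_one_units]
  have := Nat.lt_two_pow_self (n := n + 4)
  omega

theorem card_units_two_pow (n : ℕ) : Nat.card (ZMod (2 ^ (n + 1)))ˣ = 2 ^ n := by
  rw [Nat.card_eq_fintype_card, card_units_eq_totient, Nat.totient_prime_pow_succ Nat.prime_two]
  simp

theorem orderOf_eighty_one (n : ℕ) : orderOf (81 : ZMod (2 ^ (n + 4))) = 2 ^ n := by
  have := orderOf_one_add_mul_prime_pow Nat.prime_two 4 (by norm_num) (by norm_num) 5
    (by norm_num) n
  norm_num at this
  exact this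

theorem orderOf_neg_nine (n : ℕ) : orderOf (-9 : ZMod (2 ^ (n + 4))) = 2 ^ (n + 1) := by
  have hsq : ∀ j, (-9 : ZMod (2 ^ (n + 4))) ^ 2 ^ (j + 1) = 81 ^ 2 ^ j := fun j ↦ by
    rw [pow_succ' 2 j, pow_mul]
    norm_num
  apply orderOf_eq_prime_pow
  · rcases n with _ | j
    · decide
    · rw [hsq]
      refine pow_ne_one_of_lt_orderOf (by positivity) ?_
      rw [orderOf_eighty_one]
      exact Nat.pow_lt_pow_right (by norm_num) (Nat.lt_succ_self j)
  · rw [hsq]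
    exact orderOf_dvd_iff_pow_eq_one.1 (orderOf_eighty_one n).dvd

def unitNegNine (m : ℕ) : (ZMod (2 ^ m))ˣ :=
  -unitOfCoprime 9 (Nat.Coprime.pow_right m (by norm_num))

@[simp]
theorem val_unitNegNine (m : ℕ) : (unitNegNine m : ZMod (2 ^ m)) = -9 := by
  simp [unitNegNine]

theorem orderOf_unitNegNine (n : ℕ) : orderOf (unitNegNine (n + 4)) = 2 ^ (n + 1) := by
  rw [← orderOf_units, val_unitNegNine, orderOf_neg_nine]

theorem neg_one_notMem_zpowers_unitNegNine (n : ℕ) :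
    (-1 : (ZMod (2 ^ (n + 4)))ˣ) ∉ zpowers (unitNegNine (n + 4)) := by
  intro h
  obtain ⟨j, hj⟩ := (isOfFinOrder_of_finite _).mem_powers_iff_mem_zpowers.2 h
  have h16 : 16 ∣ 2 ^ (n + 4) := Dvd.intro (2 ^ n) (by ring)
  have hj16 := congrArg (fun u : (ZMod (2 ^ (n + 4)))ˣ ↦ castHom h16 (ZMod 16) u) hj
  simp only [Units.val_pow_eq_pow_val, val_unitNegNine, Units.val_neg, Units.val_one, map_pow,
    map_neg, map_one, map_ofNat] at hj16
  -- modulo 16 the powers of `-9` are `1` and `7`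
  rw [← Nat.div_add_mod j 2, pow_add, pow_mul, show (-9 : ZMod 16) ^ 2 = 1 by decide, one_pow,
    one_mul] at hj16
  rcases Nat.mod_two_eq_zero_or_one j with h0 | h1
  · rw [h0] at hj16
    revert hj16
    decide
  · rw [h1] at hj16
    revert hj16
    decide

def unitsPmOneModEight {N : ℕ} (h : 8 ∣ N) : Subgroup (ZMod N)ˣ :=
  (zpowers (-1 : (ZMod 8)ˣ)).comap (unitsMap h)

theorem index_unitsPmOneModEight {N : ℕ} [NeZero N] (h : 8 ∣ N) :
    (unitsPmOneModEight h).index = 2 := by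
  rw [unitsPmOneModEight, index_comap_of_surjective _ (unitsMap_surjective h)]
  have hcard := card_mul_index (zpowers (-1 : (ZMod 8)ˣ))
  have h8 : Nat.card (ZMod 8)ˣ = 4 := card_units_two_pow 2
  rw [Nat.card_zpowers, orderOf_neg_one_units (by norm_num), h8] at hcard
  omega

theorem eight_dvd_two_pow (n : ℕ) : 8 ∣ 2 ^ (n + 4) := Dvd.intro (2 ^ (n + 1)) (by ring)

theorem unitsMap_unitNegNine (n : ℕ) :
    unitsMap (eight_dvd_two_pow n) (unitNegNine (n + 4)) = -1 := by
  ext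
  simp only [unitsMap_def, Units.coe_map, MonoidHom.coe_coe, val_unitNegNine, map_neg, map_ofNat,
    Units.val_neg, Units.val_one]
  decide

theorem sup_zpowers_unitNegNine_eq_unitsPmOneModEight (n : ℕ) :
    zpowers (-1) ⊔ zpowers (unitNegNine (n + 4)) = unitsPmOneModEight (eight_dvd_two_pow n) := by
  have hle : zpowers (-1) ⊔ zpowers (unitNegNine (n + 4)) ≤
      unitsPmOneModEight (eight_dvd_two_pow n) := by
    refine sup_le (zpowers_le.2 ?_) (zpowers_le.2 ?_) <;> rw [unitsPmOneModEight, mem_comap]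
    · rw [unitsMap_def, Units.map_neg_one]
      exact mem_zpowers _
    · rw [unitsMap_unitNegNine]
      exact mem_zpowers _
  refine eq_of_le_of_card_ge hle ?_
  have hW := card_mul_index (unitsPmOneModEight (eight_dvd_two_pow n))
  rw [index_unitsPmOneModEight, card_units_two_pow (n + 3)] at hW
  rw [card_sup_of_disjoint (disjoint_zpowers_neg_one (neg_one_notMem_zpowers_unitNegNine n)),
    card_zpowers_neg_one_units_two_pow, Nat.card_zpowers, orderOf_unitNegNine]
  ring_nf at hW ⊢
  omega

end ZMod

namespace Zsqrtd

theorem norm_pow {d : ℤ} (x : ℤ√d) (j : ℕ) : (x ^ j).norm = x.norm ^ j :=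
  map_pow normMonoidHom x j

theorem sqrtd_pow_mul_self (k : ℕ) : (sqrtd : ℤ√2) ^ k * sqrtd ^ k = 2 ^ k := by
  rw [← mul_pow, dmuld]
  rfl

theorem isUnit_mk_span_sqrtd_pow_of_odd_norm {x : ℤ√2} (hx : Odd x.norm) (k : ℕ) :
    IsUnit (Ideal.Quotient.mk (Ideal.span {sqrtd ^ k}) x) := by
  obtain ⟨u, v, huv⟩ : IsCoprime x.norm (2 ^ k) := (Int.isCoprime_two_right.2 hx).pow_right
  have h2k : Ideal.Quotient.mk (Ideal.span {sqrtd ^ k}) (2 ^ k) = 0 :=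
    Ideal.Quotient.eq_zero_iff_mem.2 <|
      Ideal.mem_span_singleton.2 ⟨sqrtd ^ k, (sqrtd_pow_mul_self k).symm⟩
  have hinv : x * (star x * u) = 1 - v * 2 ^ k := by
    rw [← mul_assoc, ← norm_eq_mul_conj]
    exact_mod_cast (by linarith : x.norm * u = 1 - v * 2 ^ k)
  refine IsUnit.of_mul_eq_one (Ideal.Quotient.mk _ (star x * u)) ?_
  rw [← map_mul, hinv, map_sub, map_one, map_mul, h2k, mul_zero, sub_zero]

theorem odd_re_of_isUnit_mk_span_sqrtd_pow {k : ℕ} (hk : k ≠ 0) {x : ℤ√2}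
    (hx : IsUnit (Ideal.Quotient.mk (Ideal.span {sqrtd ^ k}) x)) : Odd x.re := by
  obtain ⟨b, hb⟩ := hx.exists_right_inv
  obtain ⟨y, rfl⟩ := Ideal.Quotient.mk_surjective b
  rw [← map_mul, ← map_one (Ideal.Quotient.mk _), Ideal.Quotient.eq,
    Ideal.mem_span_singleton] at hb
  obtain ⟨z, hz⟩ := (dvd_pow_self sqrtd hk).trans hb
  have hre := congrArg re hz
  simp only [re_sub, re_mul, re_one, re_sqrtd, im_sqrtd] at hre
  exact (Int.odd_mul.1 (⟨z.im - x.im * y.im, by linarith⟩ : Odd (x.re * y.re))).1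

theorem norm_eq_one_or_neg_one_mod_eight {x : ℤ√2} (hx : Odd x.re) :
    (x.norm : ZMod 8) = 1 ∨ (x.norm : ZMod 8) = -1 := by
  obtain ⟨c, hc⟩ := hx
  rw [norm_def, hc]
  push_cast
  generalize (c : ZMod 8) = a
  generalize (x.im : ZMod 8) = b
  revert a b
  decide

end Zsqrtd

open Zsqrtd ZMod

theorem mem_sup_zpowers_unitNegNine_iff_exists_norm {k : ℕ} (hk : k ≠ 0) (n : ℕ)
    (v : (ZMod (2 ^ (n + 4)))ˣ) :
    v ∈ zpowers (-1) ⊔ zpowers (unitNegNine (n + 4)) ↔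
      ∃ x : ℤ√2, IsUnit (Ideal.Quotient.mk (Ideal.span {sqrtd ^ k}) x) ∧
        (x.norm : ZMod (2 ^ (n + 4))) = v := by
  constructor
  · intro hv
    obtain ⟨_, ha, _, hb, rfl⟩ := mem_sup.1 hv
    obtain ⟨a, rfl⟩ := (isOfFinOrder_of_finite _).mem_powers_iff_mem_zpowers.2 ha
    obtain ⟨b, rfl⟩ := (isOfFinOrder_of_finite _).mem_powers_iff_mem_zpowers.2 hb
    have hnorm : ((⟨1, 1⟩ : ℤ√2) ^ a * ⟨3, 3⟩ ^ b).norm = (-1) ^ a * (-9) ^ b := by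
      rw [norm_mul, norm_pow, norm_pow]
      norm_num [norm_def]
    refine ⟨⟨1, 1⟩ ^ a * ⟨3, 3⟩ ^ b, isUnit_mk_span_sqrtd_pow_of_odd_norm ?_ k, ?_⟩
    · rw [hnorm]
      exact odd_neg_one.pow.mul (by decide : Odd (-9 : ℤ)).pow
    · rw [hnorm]
      push_cast
      simp
  · rintro ⟨x, hx, hxv⟩
    rw [sup_zpowers_unitNegNine_eq_unitsPmOneModEight, unitsPmOneModEight, mem_comap]
    have hval : ((unitsMap (eight_dvd_two_pow n) v : (ZMod 8)ˣ) : ZMod 8) = x.norm := by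
      rw [unitsMap_def, Units.coe_map, MonoidHom.coe_coe, ← hxv, map_intCast]
    rcases norm_eq_one_or_neg_one_mod_eight (odd_re_of_isUnit_mk_span_sqrtd_pow hk hx) with h | h
    · rw [show unitsMap _ v = 1 from Units.ext (by rw [hval, h, Units.val_one])]
      exact one_mem _
    · rw [show unitsMap _ v = -1 from Units.ext (by rw [hval, h, Units.val_neg, Units.val_one])]
      exact mem_zpowers _

/-- For `k ≥ 7`, the set
`U_k = { N(x) mod 2^⌈k/2⌉ : x ∈ ℤ[√2], x a unit mod (√2)^k }` is a subgroup of
`(ℤ/2^⌈k/2⌉ℤ)ˣ`; it is the internal direct product of the cyclic subgroup generated by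
the class of `-1` (of order 2) and the cyclic subgroup generated by the class of `-9`
(of order `2^⌊(k-5)/2⌋`); in particular `U_k ≃ ℤ/2 × ℤ/2^⌊(k-5)/2⌋`. -/
theorem stmt_15 (k : ℕ) (hk : 7 ≤ k) :
    ∃ U : Subgroup (ZMod (2 ^ ((k + 1) / 2)))ˣ,
      (∀ v : (ZMod (2 ^ ((k + 1) / 2)))ˣ,
        v ∈ U ↔ ∃ x : Zsqrtd 2,
          IsUnit (Ideal.Quotient.mk (Ideal.span {(Zsqrtd.sqrtd : Zsqrtd 2) ^ k}) x) ∧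
          (Zsqrtd.norm x : ZMod (2 ^ ((k + 1) / 2))) = (v : ZMod (2 ^ ((k + 1) / 2)))) ∧
      ∃ g : (ZMod (2 ^ ((k + 1) / 2)))ˣ, (g : ZMod (2 ^ ((k + 1) / 2))) = -9 ∧
        Nat.card (Subgroup.zpowers (-1 : (ZMod (2 ^ ((k + 1) / 2)))ˣ)) = 2 ∧
        Nat.card (Subgroup.zpowers g) = 2 ^ ((k - 5) / 2) ∧
        Subgroup.zpowers (-1 : (ZMod (2 ^ ((k + 1) / 2)))ˣ) ⊓ Subgroup.zpowers g = ⊥ ∧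
        Subgroup.zpowers (-1 : (ZMod (2 ^ ((k + 1) / 2)))ˣ) ⊔ Subgroup.zpowers g = U ∧
        Nonempty (U ≃* Multiplicative (ZMod 2) × Multiplicative (ZMod (2 ^ ((k - 5) / 2)))) := by
  obtain ⟨n, hn⟩ : ∃ n, (k + 1) / 2 = n + 4 := ⟨(k + 1) / 2 - 4, by omega⟩
  rw [hn, show (k - 5) / 2 = n + 1 by omega]
  have hcard : Nat.card (zpowers (unitNegNine (n + 4))) = 2 ^ (n + 1) := by
    rw [Nat.card_zpowers, orderOf_unitNegNine]
  have hdisj := disjoint_zpowers_neg_one (neg_one_notMem_zpowers_unitNegNine n)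
  refine ⟨_, mem_sup_zpowers_unitNegNine_iff_exists_norm (by omega) n, unitNegNine (n + 4),
    val_unitNegNine _, card_zpowers_neg_one_units_two_pow n, hcard, disjoint_iff.1 hdisj, rfl, ⟨?_⟩⟩
  refine (prodMulEquivSupOfDisjoint hdisj).symm.trans
    (.prodCongr (mulEquivOfCyclicCardEq ((card_zpowers_neg_one_units_two_pow n).trans ?_))
      (mulEquivOfCyclicCardEq (hcard.trans ?_))) <;>
  rw [Nat.card_congr Multiplicative.toAdd, Nat.card_zmod]
end
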